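/- arXiv:1808.07600 — 2 statements merged into one kernel-verified Lean document; each statement's English description precedes it below -/
import Mathlib

section
/- Let p be an integer-valued supermodular set-function on the subsets of a nonempty finite set S with p(∅) = 0, and assume Ḃ(p) is nonempty. Then the smallest integer β for which some element m of Ḃ(p) satisfies m(s) ≤ β for every s ∈ S equals max{ ⌈p(X)/|X|⌉ : ∅ ≠ X ⊆ S }, where ⌈·⌉ denotes the ceiling of a rational number. -/
/-!
If `m ∈ Ḃ(p)` satisfies `m ≤ β`, then `p(X) ≤ m̃(X) ≤ β |X|`, so `β` bounds every `⌈p(X)/|X|⌉`.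
Conversely let `μ` be the largest of these, so `p(X) ≤ μ |X|` for nonempty `X`, and push any
`m ∈ Ḃ(p)` below `μ`: if `m s > μ`, let `T` be the smallest `m`-tight set containing `s` (tight
sets are closed under intersection by supermodularity). Since `m̃(T) = p(T) ≤ μ |T|`, some
`t ∈ T` has `m t < μ`, and moving one unit from `s` to `t` stays in `Ḃ(p)` while decreasing the
total excess `∑ (m a - μ)⁺`.
-/

open Finset

variable {α : Type*}

/-- Integer-valued supermodular set-function. -/
def Supermodular [DecidableEq α] (p : Finset α → ℤ) : Prop :=
  ∀ X Y : Finset α, p X + p Y ≤ p (X ∩ Y) + p (X ∪ Y)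

/-- The M-convex set `Ḃ(p)` of integral elements of the base-polyhedron `B'(p)`:
all `m : α → ℤ` with `m̃(X) ≥ p(X)` for every `X` and `m̃(S) = p(S)`. -/
def Bdot [Fintype α] (p : Finset α → ℤ) : Set (α → ℤ) :=
  {m | (∀ X : Finset α, p X ≤ ∑ s ∈ X, m s) ∧ (∑ s, m s) = p Finset.univ}

/-- `x↓`: the values of `x` arranged in nonincreasing order. -/
def sortedDesc [Fintype α] (x : α → ℤ) : List ℤ :=
  ((Finset.univ.val.map x).sort (· ≤ ·)).reverse

/-- `x↑`: the values of `x` arranged in nondecreasing order. -/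
def sortedAsc [Fintype α] (x : α → ℤ) : List ℤ :=
  (Finset.univ.val.map x).sort (· ≤ ·)

/-- `x ≤_dec y`: `x↓` is lexicographically less than or equal to `y↓`. -/
def DecLE [Fintype α] (x y : α → ℤ) : Prop :=
  sortedDesc x = sortedDesc y ∨ List.Lex (· < ·) (sortedDesc x) (sortedDesc y)

/-- `x ≤_inc y`: `x↑` is lexicographically less than or equal to `y↑`. -/
def IncLE [Fintype α] (x y : α → ℤ) : Prop :=
  sortedAsc x = sortedAsc y ∨ List.Lex (· < ·) (sortedAsc x) (sortedAsc y)

/-- `m` is a decreasingly minimal element of `Bdot p`. -/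
def DecMin [Fintype α] (p : Finset α → ℤ) (m : α → ℤ) : Prop :=
  m ∈ Bdot p ∧ ∀ y ∈ Bdot p, DecLE m y

def IsTight (p : Finset α → ℤ) (m : α → ℤ) (X : Finset α) : Prop :=
  ∑ a ∈ X, m a = p X

section Tight

variable [DecidableEq α] {p : Finset α → ℤ} {m : α → ℤ}

lemma sum_add_single_sub_single (X : Finset α) (s t : α) :
    ∑ a ∈ X, (m + Pi.single t 1 - Pi.single s 1 : α → ℤ) a =
      ∑ a ∈ X, m a + (if t ∈ X then 1 else 0) - (if s ∈ X then 1 else 0) := by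
  simp only [Pi.sub_apply, Pi.add_apply, sum_sub_distrib, sum_add_distrib, sum_pi_single']

variable [Fintype α]

lemma Supermodular.isTight_inter (hp : Supermodular p) (hm : m ∈ Bdot p) {X Y : Finset α}
    (hX : IsTight p m X) (hY : IsTight p m Y) : IsTight p m (X ∩ Y) := by
  have h_union_inter : ∑ a ∈ X ∪ Y, m a + ∑ a ∈ X ∩ Y, m a = ∑ a ∈ X, m a + ∑ a ∈ Y, m a :=
    sum_union_inter
  have := hm.1 (X ∩ Y)
  have := hm.1 (X ∪ Y)
  have := hp X Y
  unfold IsTight at *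
  omega

lemma Supermodular.exists_least_isTight (hp : Supermodular p) (hm : m ∈ Bdot p) (s : α) :
    ∃ T, s ∈ T ∧ IsTight p m T ∧ ∀ X, s ∈ X → IsTight p m X → T ⊆ X := by
  classical
  let tight : Finset (Finset α) := univ.filter fun X => s ∈ X ∧ IsTight p m X
  have h_inf : s ∈ tight.inf id ∧ IsTight p m (tight.inf id) := by
    refine inf_induction (p := fun T => s ∈ T ∧ IsTight p m T)
      (by rw [top_eq_univ]; exact ⟨mem_univ s, hm.2⟩) ?_ fun X hX => (mem_filter.1 hX).2
    rintro X ⟨hsX, hX⟩ Y ⟨hsY, hY⟩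
    exact ⟨mem_inter.2 ⟨hsX, hsY⟩, hp.isTight_inter hm hX hY⟩
  exact ⟨tight.inf id, h_inf.1, h_inf.2,
    fun X hsX hX => inf_le (f := id) (mem_filter.2 ⟨mem_univ X, hsX, hX⟩)⟩

lemma add_single_sub_single_mem_Bdot (hm : m ∈ Bdot p) {s t : α}
    (ht : ∀ X, s ∈ X → IsTight p m X → t ∈ X) :
    (m + Pi.single t 1 - Pi.single s 1 : α → ℤ) ∈ Bdot p := by
  refine ⟨fun X => ?_, ?_⟩
  · have hmX := hm.1 X
    rw [sum_add_single_sub_single]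
    by_cases hsX : s ∈ X
    · by_cases htX : t ∈ X
      · simp only [hsX, htX, if_true]
        omega
      · have : ¬IsTight p m X := fun hX => htX (ht X hsX hX)
        simp only [hsX, htX, if_true, if_false]
        unfold IsTight at this
        omega
    · split_ifs <;> omega
  · rw [sum_add_single_sub_single]
    simp only [mem_univ, if_true, hm.2]
    omega

end Tight

lemma exists_lt_of_sum_le_card_mul {ι : Type*} {T : Finset ι} {m : ι → ℤ} {μ : ℤ} {s : ι}
    (hs : s ∈ T) (hμs : μ < m s) (hT : ∑ a ∈ T, m a ≤ T.card * μ) : ∃ t ∈ T, m t < μ := by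
  by_contra! h
  have : ∑ _a ∈ T, μ < ∑ a ∈ T, m a := sum_lt_sum h ⟨s, hs, hμs⟩
  simp only [sum_const, nsmul_eq_mul] at this
  omega

lemma ceil_div_card_le_iff {ι : Type*} {X : Finset ι} (hX : X.Nonempty) (a b : ℤ) :
    ⌈(a : ℚ) / X.card⌉ ≤ b ↔ a ≤ X.card * b := by
  have hc : (0 : ℚ) < X.card := by exact_mod_cast hX.card_pos
  rw [Int.ceil_le, div_le_iff₀ hc, mul_comm]
  exact_mod_cast Iff.rfl

theorem Supermodular.exists_mem_Bdot_le [Fintype α] [DecidableEq α] {p : Finset α → ℤ}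
    (hp : Supermodular p) {μ : ℤ} (hμ : ∀ X : Finset α, X.Nonempty → p X ≤ X.card * μ)
    {m : α → ℤ} (hm : m ∈ Bdot p) : ∃ m' ∈ Bdot p, ∀ s, m' s ≤ μ := by
  induction hn : ∑ a, (m a - μ).toNat using Nat.strong_induction_on generalizing m with
  | _ n ih =>
  by_cases hle : ∀ s, m s ≤ μ
  · exact ⟨m, hm, hle⟩
  simp only [not_forall, not_le] at hle
  obtain ⟨s, hμs⟩ := hle
  obtain ⟨T, hsT, hT, hT_least⟩ := hp.exists_least_isTight hm s
  obtain ⟨t, htT, hmt⟩ : ∃ t ∈ T, m t < μ :=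
    exists_lt_of_sum_le_card_mul hsT hμs (hT ▸ hμ T ⟨s, hsT⟩)
  have hts : t ≠ s := by rintro rfl; omega
  refine ih _ ?_ (add_single_sub_single_mem_Bdot hm fun X hsX hX => hT_least X hsX hX htT) rfl
  rw [← hn]
  refine sum_lt_sum (fun a _ => ?_) ⟨s, mem_univ s, ?_⟩
  · simp only [Pi.sub_apply, Pi.add_apply, Pi.single_apply]
    split_ifs <;> subst_vars <;> omega
  · simp only [Pi.sub_apply, Pi.add_apply, Pi.single_apply, if_neg hts.symm, if_true]
    omega

theorem stmt2_general [Fintype α] [DecidableEq α] [Nonempty α]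
    (p : Finset α → ℤ) (hp : Supermodular p)
    (hne : (Bdot p).Nonempty) (β : ℤ)
    (hβ : IsLeast {b : ℤ | ∃ m ∈ Bdot p, ∀ s : α, m s ≤ b} β) :
    IsGreatest {z : ℤ | ∃ X : Finset α, X.Nonempty ∧
      z = ⌈(p X : ℚ) / (X.card : ℚ)⌉} β := by
  have ceil_le_β : ∀ X : Finset α, X.Nonempty → ⌈(p X : ℚ) / X.card⌉ ≤ β := by
    obtain ⟨m, hm, hmβ⟩ := hβ.1
    intro X hX
    rw [ceil_div_card_le_iff hX, ← nsmul_eq_mul]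
    exact (hm.1 X).trans (sum_le_card_nsmul X m β fun a _ => hmβ a)
  obtain ⟨X₀, hX₀, hX₀_max⟩ := (univ.filter Finset.Nonempty).exists_max_image
    (fun X => ⌈(p X : ℚ) / X.card⌉) ⟨univ, mem_filter.2 ⟨mem_univ _, univ_nonempty⟩⟩
  have hX₀ : X₀.Nonempty := (mem_filter.1 hX₀).2
  have β_le : β ≤ ⌈(p X₀ : ℚ) / X₀.card⌉ := by
    obtain ⟨m, hm⟩ := hne
    refine hβ.2 (hp.exists_mem_Bdot_le (fun X hX => ?_) hm)
    exact (ceil_div_card_le_iff hX _ _).1 (hX₀_max X (mem_filter.2 ⟨mem_univ X, hX⟩))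
  refine ⟨⟨X₀, hX₀, le_antisymm β_le (ceil_le_β X₀ hX₀)⟩, ?_⟩
  rintro z ⟨X, hX, rfl⟩
  exact ceil_le_β X hX

/-- The smallest integer `β` covering some element of `Ḃ(p)` equals
`max{ ⌈p(X)/|X|⌉ : ∅ ≠ X ⊆ S }`. -/
theorem stmt2 [Fintype α] [DecidableEq α] [Nonempty α]
    (p : Finset α → ℤ) (hp : Supermodular p) (h0 : p ∅ = 0)
    (hne : (Bdot p).Nonempty) (β : ℤ)
    (hβ : IsLeast {b : ℤ | ∃ m ∈ Bdot p, ∀ s : α, m s ≤ b} β) :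
    IsGreatest {z : ℤ | ∃ X : Finset α, X.Nonempty ∧
      z = ⌈(p X : ℚ) / (X.card : ℚ)⌉} β :=
  stmt2_general p hp hne β hβ
end

section
/- Let p be an integer-valued supermodular set-function on the subsets of a nonempty finite set S with p(∅) = 0, assume Ḃ(p) is nonempty, and let Φ : ℤ^S → ℝ be a symmetric convex function. Then every decreasingly minimal element m of Ḃ(p) minimizes Φ over Ḃ(p); that is, Φ(m) ≤ Φ(y) for every y ∈ Ḃ(p). -/
open Finset

variable {α : Type*}

/-! Induction on the `ℓ¹` distance from the dec-min `m` to `y`. Take `s` with `y s < m s` and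
`m s` largest. The exchange property of `Ḃ(p)`, obtained from the smallest `m`-tight set
containing `s`, gives `t` with `m t < y t` and `m - χ_s + χ_t ∈ Ḃ(p)`; dec-minimality forces
`m t ≥ m s - 1`. If `m t = m s - 1`, this move just transposes two values of `m`, so it yields a
dec-min element with the same `Φ`-value, closer to `y`. Otherwise exchanging in `y` from `t` gives
`u` with `y u < m u ≤ m s ≤ m t < y t`, so `y t - y u ≥ 2` and `y - χ_t + χ_u` is a convex
combination of `y` and `y` with `t`, `u` transposed: by symmetry and convexity its `Φ`-value is at
most `Φ y`, and it is closer to `m`. -/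

theorem List.lex_lt_of_count_lt_of_pairwise_ge :
    ∀ {l' l : List ℤ}, l'.Pairwise (· ≥ ·) → l.Pairwise (· ≥ ·) → l'.length = l.length →
    ∀ a : ℤ, l'.count a < l.count a → (∀ c, a < c → l'.count c = l.count c) →
    List.Lex (· < ·) l' l
  | _, [], _, _, _, a, hlt, _ => by simp at hlt
  | [], _ :: _, _, _, hlen, _, _, _ => by simp at hlen
  | b' :: L', b :: L, hs', hs, hlen, a, hlt, habove => by
    have hb'b : b' ≤ b := by
      by_contra! hbb'
      have not_mem : ∀ c, b < c → (b :: L).count c = 0 := fun c hc =>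
        List.count_eq_zero.2 fun hmem => by
          rcases List.mem_cons.1 hmem with rfl | hmem
          · exact hc.false
          · exact (List.rel_of_pairwise_cons hs hmem).not_gt hc
      rcases lt_or_ge a b' with hab' | hb'a
      · have := habove b' hab'
        rw [not_mem b' hbb', List.count_eq_zero] at this
        exact this List.mem_cons_self
      · rw [not_mem a (hbb'.trans_le hb'a)] at hlt
        exact Nat.not_lt_zero _ hlt
    rcases hb'b.lt_or_eq with hlt' | rfl
    · exact List.Lex.rel hlt'
    · refine List.Lex.cons (lex_lt_of_count_lt_of_pairwise_ge hs'.of_cons hs.of_cons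
        (by simpa using hlen) a ?_ fun c hc => ?_)
      · simp only [List.count_cons] at hlt; omega
      · have := habove c hc; simp only [List.count_cons] at this; omega

section Sorting

variable [Fintype α]

theorem pairwise_sortedDesc (x : α → ℤ) : (sortedDesc x).Pairwise (· ≥ ·) :=
  List.pairwise_reverse.2 (Multiset.pairwise_sort _ _)

theorem length_sortedDesc (x : α → ℤ) : (sortedDesc x).length = Fintype.card α := by
  simp [sortedDesc]

theorem count_sortedDesc (x : α → ℤ) (c : ℤ) : (sortedDesc x).count c = #{u | x u = c} := by
  rw [sortedDesc, List.count_reverse, ← Multiset.coe_count, Multiset.sort_eq, Multiset.count_map,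
    Finset.card_def, Finset.filter_val]
  simp only [eq_comm]

theorem sortedDesc_comp_perm (x : α → ℤ) (σ : Equiv.Perm α) :
    sortedDesc (x ∘ σ) = sortedDesc x := by
  rw [sortedDesc, sortedDesc, ← Multiset.map_map, Multiset.map_univ_val_equiv]

end Sorting

section MoveUnit

variable [DecidableEq α]

def moveUnit (x : α → ℤ) (s t : α) : α → ℤ := x + Pi.single t 1 - Pi.single s 1

theorem moveUnit_apply (x : α → ℤ) (s t u : α) :
    moveUnit x s t u = x u + (if u = t then 1 else 0) - (if u = s then 1 else 0) := by
  simp [moveUnit, Pi.single_apply]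

theorem sum_moveUnit (x : α → ℤ) (s t : α) (X : Finset α) :
    ∑ u ∈ X, moveUnit x s t u =
      ∑ u ∈ X, x u + (if t ∈ X then 1 else 0) - (if s ∈ X then 1 else 0) := by
  simp only [moveUnit, Pi.sub_apply, Pi.add_apply, sum_sub_distrib, sum_add_distrib, sum_pi_single']

theorem moveUnit_eq_comp_swap {x : α → ℤ} {s t : α} (h : x t + 1 = x s) :
    moveUnit x s t = x ∘ Equiv.swap s t := by
  have hst : s ≠ t := by rintro rfl; omega
  ext u
  rw [moveUnit_apply, Function.comp_apply]
  rcases eq_or_ne u s with rfl | hus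
  · simp [hst]; omega
  rcases eq_or_ne u t with rfl | hut
  · simp [hus]; omega
  simp [hus, hut, Equiv.swap_apply_of_ne_of_ne hus hut]

theorem comp_swap_sub_eq (y : α → ℤ) (t u v : α) :
    y (Equiv.swap t u v) - y v = (y t - y u) * (moveUnit y t u v - y v) := by
  rw [moveUnit_apply]
  rcases eq_or_ne v t with rfl | hvt
  · by_cases v = u <;> simp_all
  rcases eq_or_ne v u with rfl | hvu
  · simp [hvt]
  simp [hvt, hvu, Equiv.swap_apply_of_ne_of_ne hvt hvu]

end MoveUnit

section L1dist

variable [Fintype α]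

def l1dist (x y : α → ℤ) : ℕ := ∑ u, (x u - y u).natAbs

theorem l1dist_comm (x y : α → ℤ) : l1dist x y = l1dist y x :=
  Finset.sum_congr rfl fun _ _ => by omega

theorem l1dist_moveUnit_add_two [DecidableEq α] {x y : α → ℤ} {s t : α} (hs : y s < x s)
    (ht : x t < y t) : l1dist (moveUnit x s t) y + 2 = l1dist x y := by
  have hst : s ≠ t := by rintro rfl; omega
  have hpt : ∀ u, (moveUnit x s t u - y u).natAbs + (Pi.single s 1 : α → ℕ) u
      + (Pi.single t 1 : α → ℕ) u = (x u - y u).natAbs := fun u => by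
    rw [moveUnit_apply]
    rcases eq_or_ne u s with rfl | hus
    · simp [hst]; omega
    rcases eq_or_ne u t with rfl | hut
    · simp [hus]; omega
    simp [hus, hut]
  simp only [l1dist, ← Finset.sum_congr rfl fun u _ => hpt u, sum_add_distrib,
    Fintype.sum_pi_single']

end L1dist

section Convexity

def IsPermInvariant (Φ : (α → ℤ) → ℝ) : Prop :=
  ∀ (z : α → ℤ) (σ : Equiv.Perm α), Φ (z ∘ σ) = Φ z

def IsIntConvex (Φ : (α → ℤ) → ℝ) : Prop :=
  ∀ (x y : α → ℤ) (lam : ℝ), 0 < lam → lam < 1 →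
    ∀ w : α → ℤ, (∀ s : α, (w s : ℝ) = lam * (x s : ℝ) + (1 - lam) * (y s : ℝ)) →
      Φ w ≤ lam * Φ x + (1 - lam) * Φ y

theorem IsIntConvex.apply_moveUnit_le [DecidableEq α] {Φ : (α → ℤ) → ℝ}
    (hconv : IsIntConvex Φ) (hsym : IsPermInvariant Φ) {y : α → ℤ} {t u : α}
    (h : y u + 2 ≤ y t) : Φ (moveUnit y t u) ≤ Φ y := by
  set G : ℝ := y t - y u with hG
  have hG2 : 2 ≤ G := by rw [hG]; exact_mod_cast (by omega : (2 : ℤ) ≤ y t - y u)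
  -- `moveUnit y t u` lies on the segment from `y` to its transposition, at parameter `1 / G`
  have hw : ∀ v, (moveUnit y t u v : ℝ)
      = (1 - 1 / G) * y v + (1 - (1 - 1 / G)) * (y ∘ Equiv.swap t u) v := fun v => by
    have hswap : (y (Equiv.swap t u v) : ℝ) = y v + G * (moveUnit y t u v - y v) := by
      rw [hG]; exact_mod_cast (by linear_combination comp_swap_sub_eq y t u v)
    rw [Function.comp_apply, hswap]
    field_simp
    ring
  have hlam : 0 < 1 / G ∧ 1 / G < 1 := ⟨by positivity, by rw [div_lt_one] <;> linarith⟩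
  have := hconv y (y ∘ Equiv.swap t u) (1 - 1 / G) (by linarith) (by linarith) _ hw
  rw [hsym] at this
  linarith

end Convexity

section Exchange

variable [Fintype α] [DecidableEq α] {p : Finset α → ℤ}

theorem Supermodular.tight_inter (hp : Supermodular p) {m : α → ℤ} (hm : m ∈ Bdot p)
    {X Y : Finset α} (hX : ∑ u ∈ X, m u = p X) (hY : ∑ u ∈ Y, m u = p Y) :
    ∑ u ∈ X ∩ Y, m u = p (X ∩ Y) := by
  have := Finset.sum_union_inter (s₁ := X) (s₂ := Y) (f := m)
  linarith [hp X Y, hm.1 (X ∩ Y), hm.1 (X ∪ Y)]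

theorem Supermodular.exists_moveUnit_mem_Bdot (hp : Supermodular p) {m y : α → ℤ}
    (hm : m ∈ Bdot p) (hy : y ∈ Bdot p) {s : α} (hs : y s < m s) :
    ∃ t, m t < y t ∧ moveUnit m s t ∈ Bdot p := by
  classical
  let TightAt (X : Finset α) : Prop := ∑ u ∈ X, m u = p X ∧ s ∈ X
  -- the smallest `m`-tight set containing `s`
  let T : Finset α := ({X | TightAt X} : Finset (Finset α)).inf id
  have hT : TightAt T := Finset.inf_induction ⟨hm.2, mem_univ s⟩
    (fun X hX Y hY => ⟨hp.tight_inter hm hX.1 hY.1, mem_inter.2 ⟨hX.2, hY.2⟩⟩)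
    (fun X hX => (mem_filter.1 hX).2)
  obtain ⟨t, htT, hty⟩ : ∃ t ∈ T, m t < y t := by
    by_contra! hle
    have := Finset.sum_lt_sum hle ⟨s, hT.2, hs⟩
    linarith [hy.1 T, hT.1]
  refine ⟨t, hty, fun X => ?_, by rw [sum_moveUnit, hm.2]; simp⟩
  rw [sum_moveUnit]
  have hX := hm.1 X
  by_cases hsX : s ∈ X
  · by_cases htX : t ∈ X
    · simp [hsX, htX, hX]
    · have hslack : ∑ u ∈ X, m u ≠ p X := fun htight =>
        htX (Finset.inf_le (f := id) (mem_filter.2 ⟨mem_univ X, htight, hsX⟩) htT)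
      simp only [hsX, htX, if_true, if_false]
      omega
  · split_ifs <;> omega

end Exchange

section DecMin

variable [Fintype α]

theorem lex_sortedDesc_moveUnit [DecidableEq α] {x : α → ℤ} {s t : α} (h : x t + 2 ≤ x s) :
    List.Lex (· < ·) (sortedDesc (moveUnit x s t)) (sortedDesc x) := by
  have hst : s ≠ t := by rintro rfl; omega
  have hlevel : ∀ c, x s ≤ c →
      ({u | moveUnit x s t u = c} : Finset α) = ({u | x u = c} : Finset α).erase s := by
    intro c hc
    ext u
    simp only [mem_filter, mem_erase, mem_univ, true_and, moveUnit_apply]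
    rcases eq_or_ne u s with rfl | hus
    · simp [hst]; omega
    rcases eq_or_ne u t with rfl | hut
    · simp [hus]; omega
    simp [hus, hut]
  refine List.lex_lt_of_count_lt_of_pairwise_ge (pairwise_sortedDesc _) (pairwise_sortedDesc _)
    (by simp only [length_sortedDesc]) (x s) ?_ fun c hc => ?_
  · rw [count_sortedDesc, count_sortedDesc, hlevel _ le_rfl]
    exact card_erase_lt_of_mem (by simp)
  · rw [count_sortedDesc, count_sortedDesc, hlevel _ hc.le, erase_eq_of_notMem (by simp [hc.ne])]

variable {p : Finset α → ℤ} {m : α → ℤ}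

theorem DecMin.comp_perm (hm : DecMin p m) (σ : Equiv.Perm α) (hσ : m ∘ σ ∈ Bdot p) :
    DecMin p (m ∘ σ) :=
  ⟨hσ, fun y hy => by simpa only [DecLE, sortedDesc_comp_perm] using hm.2 y hy⟩

theorem DecMin.le_add_one [DecidableEq α] (hm : DecMin p m) {s t : α}
    (hmove : moveUnit m s t ∈ Bdot p) : m s ≤ m t + 1 := by
  by_contra! h
  have hlt := lex_sortedDesc_moveUnit (x := m) (s := s) (t := t) (by omega)
  rcases hm.2 _ hmove with heq | hgt
  · exact irrefl_of (List.Lex (· < ·)) _ (heq ▸ hlt)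
  · exact asymm hgt hlt

end DecMin

theorem Bdot.exists_lt_of_ne [Fintype α] {p : Finset α → ℤ} {m y : α → ℤ} (hm : m ∈ Bdot p)
    (hy : y ∈ Bdot p) (hne : m ≠ y) : ∃ s, y s < m s := by
  by_contra! hle
  refine hne (funext fun u => ?_)
  exact (Finset.sum_eq_sum_iff_of_le fun u _ => hle u).1 (hm.2.trans hy.2.symm) u (mem_univ u)

theorem DecMin.apply_le [Fintype α] [DecidableEq α] {p : Finset α → ℤ} (hp : Supermodular p)
    {Φ : (α → ℤ) → ℝ} (hconv : IsIntConvex Φ) (hsym : IsPermInvariant Φ) {m y : α → ℤ}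
    (hm : DecMin p m) (hy : y ∈ Bdot p) : Φ m ≤ Φ y := by
  induction hd : l1dist m y using Nat.strong_induction_on generalizing m y with
  | _ d ih =>
  rcases eq_or_ne m y with rfl | hne
  · rfl
  obtain ⟨s, hs, hsmax⟩ := Finset.exists_max_image ({u | y u < m u} : Finset α) m
    (by simpa [Finset.Nonempty] using Bdot.exists_lt_of_ne hm.1 hy hne)
  simp only [mem_filter, mem_univ, true_and] at hs hsmax
  obtain ⟨t, hmt, hmove⟩ := hp.exists_moveUnit_mem_Bdot hm.1 hy hs
  rcases (hm.le_add_one hmove).eq_or_lt with hswap | hlt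
  · -- the move only transposes two values of `m`
    have hclose := l1dist_moveUnit_add_two hs hmt
    rw [moveUnit_eq_comp_swap hswap.symm] at hmove hclose
    rw [← hsym m (Equiv.swap s t)]
    exact ih _ (by omega) (hm.comp_perm _ hmove) hy rfl
  · obtain ⟨u, hyu, hymove⟩ := hp.exists_moveUnit_mem_Bdot hy hm.1 hmt
    have hgap : y u + 2 ≤ y t := by linarith [hsmax u hyu]
    have hclose := l1dist_moveUnit_add_two hmt hyu
    rw [l1dist_comm, l1dist_comm y] at hclose
    exact (ih _ (by omega) hm hymove rfl).trans (hconv.apply_moveUnit_le hsym hgap)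

theorem stmt11_general [Fintype α] [DecidableEq α]
    (p : Finset α → ℤ) (hp : Supermodular p)
    (Φ : (α → ℤ) → ℝ)
    (hsym : ∀ (z : α → ℤ) (σ : Equiv.Perm α), Φ (z ∘ σ) = Φ z)
    (hconv : ∀ (x y : α → ℤ) (lam : ℝ), 0 < lam → lam < 1 →
      ∀ w : α → ℤ, (∀ s : α, (w s : ℝ) = lam * (x s : ℝ) + (1 - lam) * (y s : ℝ)) →
        Φ w ≤ lam * Φ x + (1 - lam) * Φ y)
    (m : α → ℤ) (hm : DecMin p m) :
    ∀ y ∈ Bdot p, Φ m ≤ Φ y :=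
  fun _ hy => hm.apply_le hp hconv hsym hy

/-- Every dec-min element of `Ḃ(p)` minimizes any symmetric convex function
`Φ : ℤ^S → ℝ` over `Ḃ(p)`. -/
theorem stmt11 [Fintype α] [DecidableEq α] [Nonempty α]
    (p : Finset α → ℤ) (hp : Supermodular p) (h0 : p ∅ = 0)
    (hne : (Bdot p).Nonempty)
    (Φ : (α → ℤ) → ℝ)
    (hsym : ∀ (z : α → ℤ) (σ : Equiv.Perm α), Φ (z ∘ σ) = Φ z)
    (hconv : ∀ (x y : α → ℤ) (lam : ℝ), 0 < lam → lam < 1 →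
      ∀ w : α → ℤ, (∀ s : α, (w s : ℝ) = lam * (x s : ℝ) + (1 - lam) * (y s : ℝ)) →
        Φ w ≤ lam * Φ x + (1 - lam) * Φ y)
    (m : α → ℤ) (hm : DecMin p m) :
    ∀ y ∈ Bdot p, Φ m ≤ Φ y :=
  stmt11_general p hp Φ hsym hconv m hm
end
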